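/- Under the same setup, with Φθ*^∞ = ΠV the projection of the true value function, ‖Φθ*ⁿ − Φθ*^∞‖_∞ ≤ (γ^n ‖Π‖_∞)/(1 − γ^n ‖Π‖_∞) · ‖ΠV − V‖_∞. In particular this bound tends to 0 as n → ∞. -/
import Mathlib
set_option maxHeartbeats 1000000

open Matrix BigOperators

/-- sup-norm of a vector -/
noncomputable def supNorm {S : ℕ} (x : Fin S → ℝ) : ℝ := ⨆ i, |x i|

/-- induced ∞-norm of a matrix: maximum absolute row sum -/
noncomputable def matInftyNorm {S : ℕ} (A : Matrix (Fin S) (Fin S) ℝ) : ℝ :=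
  ⨆ i, ∑ j, |A i j|

section aux
variable {S : ℕ} [NeZero S]

lemma abs_le_supNorm (x : Fin S → ℝ) (i : Fin S) : |x i| ≤ supNorm x := by
  unfold supNorm
  exact le_ciSup (f := fun i => |x i|) (Set.Finite.bddAbove (Set.finite_range _)) i

lemma supNorm_le {x : Fin S → ℝ} {c : ℝ} (h : ∀ i, |x i| ≤ c) : supNorm x ≤ c :=
  ciSup_le h

lemma supNorm_nonneg (x : Fin S → ℝ) : 0 ≤ supNorm x :=
  le_trans (abs_nonneg _) (abs_le_supNorm x (Classical.arbitrary _))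

lemma rowSum_le_matInftyNorm (A : Matrix (Fin S) (Fin S) ℝ) (i : Fin S) :
    ∑ j, |A i j| ≤ matInftyNorm A := by
  unfold matInftyNorm
  exact le_ciSup (f := fun i => ∑ j, |A i j|) (Set.Finite.bddAbove (Set.finite_range _)) i

lemma matInftyNorm_nonneg (A : Matrix (Fin S) (Fin S) ℝ) : 0 ≤ matInftyNorm A :=
  le_trans (Finset.sum_nonneg fun _ _ => abs_nonneg _)
    (rowSum_le_matInftyNorm A (Classical.arbitrary _))

lemma supNorm_mulVec_le (A : Matrix (Fin S) (Fin S) ℝ) (x : Fin S → ℝ) :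
    supNorm (A.mulVec x) ≤ matInftyNorm A * supNorm x := by
  apply supNorm_le
  intro i
  calc |(A.mulVec x) i| ≤ ∑ j, |A i j| * |x j| := by
        rw [Matrix.mulVec, dotProduct]
        exact le_trans (Finset.abs_sum_le_sum_abs _ _)
          (le_of_eq (Finset.sum_congr rfl fun j _ => abs_mul _ _))
    _ ≤ ∑ j, |A i j| * supNorm x :=
        Finset.sum_le_sum fun j _ => mul_le_mul_of_nonneg_left (abs_le_supNorm x j) (abs_nonneg _)
    _ = (∑ j, |A i j|) * supNorm x := (Finset.sum_mul _ _ _).symm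
    _ ≤ matInftyNorm A * supNorm x :=
        mul_le_mul_of_nonneg_right (rowSum_le_matInftyNorm A i) (supNorm_nonneg x)

omit [NeZero S] in
lemma stoch_pow {P : Matrix (Fin S) (Fin S) ℝ}
    (hPnonneg : ∀ i j, 0 ≤ P i j) (hProw : ∀ i, ∑ j, P i j = 1) (k : ℕ) :
    (∀ i j, 0 ≤ (P ^ k) i j) ∧ (∀ i, ∑ j, (P ^ k) i j = 1) := by
  induction k with
  | zero =>
    constructor
    · intro i j; simp [Matrix.one_apply]; positivity
    · intro i; simp [Matrix.one_apply]
  | succ k ih =>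
    rw [pow_succ]
    constructor
    · intro i j
      rw [Matrix.mul_apply]
      exact Finset.sum_nonneg fun l _ => mul_nonneg (ih.1 i l) (hPnonneg l j)
    · intro i
      simp only [Matrix.mul_apply]
      rw [Finset.sum_comm]
      calc ∑ l, ∑ j, (P ^ k) i l * P l j = ∑ l, (P ^ k) i l * ∑ j, P l j := by
            simp [Finset.mul_sum]
        _ = 1 := by simp [hProw, ih.2 i]

lemma supNorm_stoch_mulVec_le {P : Matrix (Fin S) (Fin S) ℝ}
    (hPnonneg : ∀ i j, 0 ≤ P i j) (hProw : ∀ i, ∑ j, P i j = 1) (k : ℕ) (x : Fin S → ℝ) :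
    supNorm ((P ^ k).mulVec x) ≤ supNorm x := by
  obtain ⟨h1, h2⟩ := stoch_pow hPnonneg hProw k
  apply supNorm_le
  intro i
  calc |((P ^ k).mulVec x) i| ≤ ∑ j, |(P ^ k) i j| * |x j| := by
        rw [Matrix.mulVec, dotProduct]
        exact le_trans (Finset.abs_sum_le_sum_abs _ _)
          (le_of_eq (Finset.sum_congr rfl fun j _ => abs_mul _ _))
    _ ≤ ∑ j, (P ^ k) i j * supNorm x := by
        apply Finset.sum_le_sum
        intro j _
        rw [abs_of_nonneg (h1 i j)]
        exact mul_le_mul_of_nonneg_left (abs_le_supNorm x j) (h1 i j)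
    _ = supNorm x := by rw [← Finset.sum_mul, h2, one_mul]

lemma supNorm_triangle (x y : Fin S → ℝ) : supNorm (x + y) ≤ supNorm x + supNorm y := by
  apply supNorm_le
  intro i
  exact le_trans (abs_add_le _ _) (add_le_add (abs_le_supNorm x i) (abs_le_supNorm y i))

omit [NeZero S] in
lemma supNorm_smul (c : ℝ) (x : Fin S → ℝ) : supNorm (c • x) = |c| * supNorm x := by
  unfold supNorm
  rw [Real.mul_iSup_of_nonneg (abs_nonneg c)]
  congr 1; ext i; simp [abs_mul]
end aux

theorem stmt6 {S m : ℕ} [NeZero S] [NeZero m]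
    (γ : ℝ) (hγ : γ ∈ Set.Ioo (0:ℝ) 1) (n : ℕ) (hn : 1 ≤ n)
    (Φ : Matrix (Fin S) (Fin m) ℝ)
    (P : Matrix (Fin S) (Fin S) ℝ)
    (hPnonneg : ∀ i j, 0 ≤ P i j) (hProw : ∀ i, ∑ j, P i j = 1)
    (R : Fin S → ℝ)
    (Pi : Matrix (Fin S) (Fin S) ℝ)
    (Tn : (Fin S → ℝ) → (Fin S → ℝ))
    (hTn : ∀ x, Tn x = (∑ k ∈ Finset.range n, (γ ^ k) • ((P ^ k).mulVec R))
        + (γ ^ n) • ((P ^ n).mulVec x))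
    (V : Fin S → ℝ) (hV : V = ∑' k : ℕ, (γ ^ k) • ((P ^ k).mulVec R))
    (hρ : γ ^ n * matInftyNorm Pi < 1)
    (θn : Fin m → ℝ) (hfix : Φ.mulVec θn = Pi.mulVec (Tn (Φ.mulVec θn))) :
    supNorm (Φ.mulVec θn - Pi.mulVec V)
      ≤ (γ ^ n * matInftyNorm Pi) / (1 - γ ^ n * matInftyNorm Pi)
        * supNorm (Pi.mulVec V - V) := by
  obtain ⟨hγ0, hγ1⟩ := hγ
  set f : ℕ → Fin S → ℝ := fun k => (γ ^ k) • ((P ^ k).mulVec R) with hf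
  -- summability
  have hsum : Summable f := by
    rw [_root_.Pi.summable]
    intro i
    apply Summable.of_abs
    refine Summable.of_nonneg_of_le (f := fun k => γ ^ k * supNorm R)
      (fun k => abs_nonneg _) ?_
      (Summable.mul_right _ (summable_geometric_of_lt_one hγ0.le hγ1))
    intro k
    have h1 := abs_le_supNorm ((P ^ k).mulVec R) i
    have h2 := supNorm_stoch_mulVec_le hPnonneg hProw k R
    show |(γ ^ k • ((P ^ k).mulVec R)) i| ≤ γ ^ k * supNorm R
    rw [show ((γ ^ k • ((P ^ k).mulVec R)) i) = γ ^ k * ((P ^ k).mulVec R) i from rfl,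
      abs_mul, abs_pow, abs_of_nonneg hγ0.le]
    exact mul_le_mul_of_nonneg_left (h1.trans h2) (pow_nonneg hγ0.le k)
  -- T_n V = V
  have hTnV : Tn V = V := by
    rw [hTn V, hV]
    have hL : ∀ x : Fin S → ℝ, (γ ^ n) • ((P ^ n).mulVec x) =
        ((γ ^ n) • LinearMap.toContinuousLinearMap (Matrix.mulVecLin (P ^ n))) x :=
      fun x => rfl
    calc (∑ k ∈ Finset.range n, f k)
          + (γ ^ n) • ((P ^ n).mulVec (∑' k : ℕ, f k))
        = (∑ k ∈ Finset.range n, f k) + ∑' k : ℕ, f (k + n) := by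
          rw [hL, ContinuousLinearMap.map_tsum _ hsum]
          congr 1
          apply tsum_congr
          intro k
          show (γ ^ n) • ((P ^ n).mulVec ((γ ^ k) • ((P ^ k).mulVec R)))
              = (γ ^ (k + n)) • ((P ^ (k + n)).mulVec R)
          rw [Matrix.mulVec_smul, smul_smul, Matrix.mulVec_mulVec,
            ← pow_add, ← pow_add, add_comm n k]
      _ = ∑' k : ℕ, f k := Summable.sum_add_tsum_nat_add n hsum
  -- error identity
  have hkey : Φ.mulVec θn - Pi.mulVec V
      = Pi.mulVec ((γ ^ n) • ((P ^ n).mulVec (Φ.mulVec θn - V))) := by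
    have hinner : Tn (Φ.mulVec θn) - Tn V
        = (γ ^ n) • ((P ^ n).mulVec (Φ.mulVec θn - V)) := by
      rw [hTn (Φ.mulVec θn), hTn V, Matrix.mulVec_sub, smul_sub]
      abel
    calc Φ.mulVec θn - Pi.mulVec V
        = Pi.mulVec (Tn (Φ.mulVec θn)) - Pi.mulVec (Tn V) := by rw [← hfix, hTnV]
      _ = Pi.mulVec (Tn (Φ.mulVec θn) - Tn V) := (Matrix.mulVec_sub _ _ _).symm
      _ = _ := by rw [hinner]
  set ρ := γ ^ n * matInftyNorm Pi with hρdef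
  have hρ0 : 0 ≤ ρ := mul_nonneg (pow_nonneg hγ0.le n) (matInftyNorm_nonneg Pi)
  have hstep : supNorm (Φ.mulVec θn - Pi.mulVec V)
      ≤ ρ * (supNorm (Φ.mulVec θn - Pi.mulVec V) + supNorm (Pi.mulVec V - V)) := by
    have hsplit : supNorm (Φ.mulVec θn - V)
        ≤ supNorm (Φ.mulVec θn - Pi.mulVec V) + supNorm (Pi.mulVec V - V) := by
      have h : Φ.mulVec θn - V = (Φ.mulVec θn - Pi.mulVec V) + (Pi.mulVec V - V) := by abel
      rw [h]; exact supNorm_triangle _ _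
    calc supNorm (Φ.mulVec θn - Pi.mulVec V)
        = supNorm (Pi.mulVec ((γ ^ n) • ((P ^ n).mulVec (Φ.mulVec θn - V)))) := by rw [← hkey]
      _ ≤ matInftyNorm Pi * supNorm ((γ ^ n) • ((P ^ n).mulVec (Φ.mulVec θn - V))) :=
          supNorm_mulVec_le _ _
      _ = matInftyNorm Pi * (γ ^ n * supNorm ((P ^ n).mulVec (Φ.mulVec θn - V))) := by
          rw [supNorm_smul, abs_pow, abs_of_nonneg hγ0.le]
      _ ≤ matInftyNorm Pi * (γ ^ n * supNorm (Φ.mulVec θn - V)) := by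
          apply mul_le_mul_of_nonneg_left _ (matInftyNorm_nonneg Pi)
          exact mul_le_mul_of_nonneg_left
            (supNorm_stoch_mulVec_le hPnonneg hProw n _) (pow_nonneg hγ0.le n)
      _ ≤ ρ * (supNorm (Φ.mulVec θn - Pi.mulVec V) + supNorm (Pi.mulVec V - V)) := by
          rw [hρdef]
          nlinarith [matInftyNorm_nonneg Pi, pow_nonneg hγ0.le n,
            supNorm_nonneg (Φ.mulVec θn - V)]
  have hone : 0 < 1 - ρ := by linarith
  rw [div_mul_eq_mul_div, le_div_iff₀ hone]
  nlinarith [supNorm_nonneg (Pi.mulVec V - V)]
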